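/- Let H be a Hardy field containing ℒℰ and let f ∈ H have polynomial growth. Then f can be written in the form f(t) = p(t) + x(t), where p is a polynomial with real coefficients and x ∈ H is strongly non-polynomial, i.e., either t^k ≺ x(t) ≺ t^{k+1} for some nonnegative integer k, or x(t) → 0 as t → +∞. -/

import Mathlib

open Filter MeasureTheory Topology

noncomputable section

/-- `f ≺ g` : `f(t)/g(t) → 0` as `t → +∞`. -/
def Prec (f g : ℝ → ℝ) : Prop :=
  Filter.Tendsto (fun t => f t / g t) Filter.atTop (nhds 0)

/-- `f ≪ g` : `|f(t)| ≤ C |g(t)|` for some constant `C > 0` and all large `t`. -/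
def Dom (f g : ℝ → ℝ) : Prop :=
  ∃ C : ℝ, 0 < C ∧ ∀ᶠ t in Filter.atTop, |f t| ≤ C * |g t|

/-- `f` has polynomial growth: `f(t)/t^k → 0` for some positive integer `k`. -/
def PolyGrowth (f : ℝ → ℝ) : Prop :=
  ∃ k : ℕ, 0 < k ∧ Filter.Tendsto (fun t => f t / t ^ k) Filter.atTop (nhds 0)

/-- The logarithmico-exponential functions of Hardy: built from constants and the
identity by `+`, `-`, `*`, `/`, `exp`, `log` and composition. -/
inductive IsLE : (ℝ → ℝ) → Prop
  | const (c : ℝ) : IsLE fun _ => c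
  | id : IsLE fun t => t
  | add {f g} : IsLE f → IsLE g → IsLE (f + g)
  | sub {f g} : IsLE f → IsLE g → IsLE (f - g)
  | mul {f g} : IsLE f → IsLE g → IsLE (f * g)
  | div {f g} : IsLE f → IsLE g → IsLE (f / g)
  | exp {f} : IsLE f → IsLE fun t => Real.exp (f t)
  | log {f} : IsLE f → IsLE fun t => Real.log (f t)
  | comp {f g} : IsLE f → IsLE g → IsLE (f ∘ g)

/-- A Hardy field: a collection of (representatives of) germs at `+∞` of real functions,
closed under germ equality, forming a field under pointwise operations, and closed under
differentiation (each element is eventually differentiable, with derivative again in `H`). -/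
structure IsHardyField (H : Set (ℝ → ℝ)) : Prop where
  mem_congr : ∀ {f g : ℝ → ℝ}, f ∈ H → f =ᶠ[Filter.atTop] g → g ∈ H
  zero_mem : (fun _ : ℝ => (0 : ℝ)) ∈ H
  one_mem : (fun _ : ℝ => (1 : ℝ)) ∈ H
  add_mem : ∀ {f g : ℝ → ℝ}, f ∈ H → g ∈ H → f + g ∈ H
  neg_mem : ∀ {f : ℝ → ℝ}, f ∈ H → -f ∈ H
  mul_mem : ∀ {f g : ℝ → ℝ}, f ∈ H → g ∈ H → f * g ∈ H
  inv_mem : ∀ {f : ℝ → ℝ}, f ∈ H → ¬ (f =ᶠ[Filter.atTop] fun _ => (0 : ℝ)) →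
    (fun t => (f t)⁻¹) ∈ H
  eventuallyDifferentiable : ∀ {f : ℝ → ℝ}, f ∈ H →
    ∀ᶠ t in Filter.atTop, DifferentiableAt ℝ f t
  deriv_mem : ∀ {f : ℝ → ℝ}, f ∈ H → deriv f ∈ H

/-- `H` contains (the germs of) all logarithmico-exponential functions. -/
def ContainsLE (H : Set (ℝ → ℝ)) : Prop := ∀ f : ℝ → ℝ, IsLE f → f ∈ H

/-- strongly non-polynomial: `t^k ≺ f ≺ t^{k+1}` for some `k ∈ ℕ`, or `f(t) → 0`. -/
def StronglyNonPoly (f : ℝ → ℝ) : Prop :=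
  (∃ k : ℕ, Prec (fun t => t ^ k) f ∧ Prec f fun t => t ^ (k + 1)) ∨
    Filter.Tendsto f Filter.atTop (nhds 0)


/-! An element `f` of a Hardy field `H` that is not eventually zero is eventually of one
sign: `f · f⁻¹ ∈ H` is eventually continuous and takes only the values `0` and `1`. Applied
to `f'`, this makes every `f ∈ H` eventually monotone, so `f` tends to `±∞` or to a finite
limit. Now peel off monomials: if `f ≺ t^(k+1)`, then `f / t^k ∈ H` either tends to `±∞`,
and `f` itself is strongly non-polynomial, or to some `c`, and then `f - c t^k ≺ t^k`, so
induction on `k` applies. -/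

section Analysis

theorem IsPreconnected.pos_of_ne_zero {X : Type*} [TopologicalSpace X] {s : Set X}
    {f : X → ℝ} (hs : IsPreconnected s) (hf : ContinuousOn f s) (hne : ∀ x ∈ s, f x ≠ 0)
    {a : X} (ha : a ∈ s) (hfa : 0 < f a) {x : X} (hx : x ∈ s) : 0 < f x := by
  by_contra! hfx
  obtain ⟨y, hy, hfy⟩ := hs.intermediate_value hx ha hf ⟨hfx, hfa.le⟩
  exact hne y hy hfy

theorem eventually_pos_or_neg_of_continuousAt {f : ℝ → ℝ}
    (hc : ∀ᶠ t in atTop, ContinuousAt f t) (hne : ∀ᶠ t in atTop, f t ≠ 0) :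
    (∀ᶠ t in atTop, 0 < f t) ∨ ∀ᶠ t in atTop, f t < 0 := by
  obtain ⟨T, hT⟩ := eventually_atTop.1 (hc.and hne)
  have hcont : ContinuousOn f (Set.Ici T) := fun t ht => (hT t ht).1.continuousWithinAt
  rcases (hT T le_rfl).2.lt_or_gt with hneg | hpos
  · refine Or.inr (eventually_atTop.2 ⟨T, fun t ht => neg_pos.1 ?_⟩)
    exact isPreconnected_Ici.pos_of_ne_zero hcont.neg (fun x hx => neg_ne_zero.2 (hT x hx).2)
      (Set.mem_Ici.2 le_rfl) (neg_pos.2 hneg) ht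
  · exact Or.inl (eventually_atTop.2 ⟨T, fun t ht =>
      isPreconnected_Ici.pos_of_ne_zero hcont (fun x hx => (hT x hx).2) (Set.mem_Ici.2 le_rfl)
        hpos ht⟩)

theorem MonotoneOn.tendsto_atTop_or_nhds_of_Ici {ι α : Type*} [LinearOrder ι]
    [ConditionallyCompleteLinearOrder α] [TopologicalSpace α] [OrderTopology α] {f : ι → α}
    {T : ι} (h : MonotoneOn f (Set.Ici T)) :
    Tendsto f atTop atTop ∨ ∃ l, Tendsto f atTop (𝓝 l) := by
  have hmono : Monotone fun t => f (max t T) := fun s t hst =>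
    h (le_max_right s T) (le_max_right t T) (max_le_max hst le_rfl)
  have hf : (fun t => f (max t T)) =ᶠ[atTop] f :=
    (eventually_ge_atTop T).mono fun t ht => by simp only [max_eq_left ht]
  exact (tendsto_atTop_of_monotone hmono).imp (·.congr' hf) fun ⟨l, hl⟩ => ⟨l, hl.congr' hf⟩

theorem AntitoneOn.tendsto_atBot_or_nhds_of_Ici {ι α : Type*} [LinearOrder ι]
    [ConditionallyCompleteLinearOrder α] [TopologicalSpace α] [OrderTopology α] {f : ι → α}
    {T : ι} (h : AntitoneOn f (Set.Ici T)) :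
    Tendsto f atTop atBot ∨ ∃ l, Tendsto f atTop (𝓝 l) :=
  h.dual_right.tendsto_atTop_or_nhds_of_Ici

theorem exists_monotoneOn_Ici_of_eventually_deriv_nonneg {f : ℝ → ℝ}
    (hd : ∀ᶠ t in atTop, DifferentiableAt ℝ f t) (hf' : ∀ᶠ t in atTop, 0 ≤ deriv f t) :
    ∃ T, MonotoneOn f (Set.Ici T) := by
  obtain ⟨T, hT⟩ := eventually_atTop.1 (hd.and hf')
  exact ⟨T, monotoneOn_of_deriv_nonneg (convex_Ici T)
    (fun t ht => (hT t ht).1.continuousAt.continuousWithinAt)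
    (fun t ht => (hT t (interior_subset ht)).1.differentiableWithinAt)
    (fun t ht => (hT t (interior_subset ht)).2)⟩

theorem exists_antitoneOn_Ici_of_eventually_deriv_nonpos {f : ℝ → ℝ}
    (hd : ∀ᶠ t in atTop, DifferentiableAt ℝ f t) (hf' : ∀ᶠ t in atTop, deriv f t ≤ 0) :
    ∃ T, AntitoneOn f (Set.Ici T) := by
  obtain ⟨T, hT⟩ := eventually_atTop.1 (hd.and hf')
  exact ⟨T, antitoneOn_of_deriv_nonpos (convex_Ici T)
    (fun t ht => (hT t ht).1.continuousAt.continuousWithinAt)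
    (fun t ht => (hT t (interior_subset ht)).1.differentiableWithinAt)
    (fun t ht => (hT t (interior_subset ht)).2)⟩

end Analysis

section Asymptotics

theorem prec_of_tendsto_div_atTop {f g : ℝ → ℝ}
    (h : Tendsto (fun t => f t / g t) atTop atTop) : Prec g f := by
  simpa only [Prec, Pi.inv_def, inv_div] using h.inv_tendsto_atTop

theorem prec_of_tendsto_div_atBot {f g : ℝ → ℝ}
    (h : Tendsto (fun t => f t / g t) atTop atBot) : Prec g f := by
  simpa only [Prec, Function.comp_def, inv_div] using tendsto_inv_atBot_zero.comp h

theorem prec_pow_of_tendsto_div_pow {f : ℝ → ℝ} {k : ℕ} {c : ℝ}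
    (h : Tendsto (fun t => f t / t ^ k) atTop (𝓝 c)) :
    Prec (fun t => f t - c * t ^ k) fun t => t ^ k := by
  have hc : Tendsto (fun t => f t / t ^ k - c) atTop (𝓝 0) := by
    simpa only [sub_self] using h.sub_const c
  refine hc.congr' ((eventually_gt_atTop 0).mono fun t ht => ?_)
  field_simp [pow_ne_zero k ht.ne']

end Asymptotics

theorem isLE_pow (j : ℕ) : IsLE fun t : ℝ => t ^ j := by
  induction j with
  | zero => simpa using IsLE.const 1
  | succ n ih => simpa only [pow_succ, Pi.mul_def] using IsLE.mul ih IsLE.id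

namespace IsHardyField

variable {H : Set (ℝ → ℝ)} {f : ℝ → ℝ}

theorem sub_mem (hH : IsHardyField H) {g : ℝ → ℝ} (hf : f ∈ H) (hg : g ∈ H) :
    (fun t => f t - g t) ∈ H := by
  have h := hH.add_mem hf (hH.neg_mem hg)
  rwa [← sub_eq_add_neg] at h

theorem div_pow_mem (hH : IsHardyField H) (hLE : ContainsLE H) (hf : f ∈ H) (k : ℕ) :
    (fun t => f t / t ^ k) ∈ H := by
  have hpow_ne : ¬ (fun t : ℝ => t ^ k) =ᶠ[atTop] fun _ => 0 := fun h =>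
    (h.and (eventually_gt_atTop 0)).exists.elim fun t ⟨ht, hpos⟩ =>
      (pow_pos hpos k).ne' ht
  simpa only [Pi.mul_def, ← div_eq_mul_inv] using
    hH.mul_mem hf (hH.inv_mem (hLE _ (isLE_pow k)) hpow_ne)

theorem eventually_continuousAt (hH : IsHardyField H) (hf : f ∈ H) :
    ∀ᶠ t in atTop, ContinuousAt f t :=
  (hH.eventuallyDifferentiable hf).mono fun _ ht => ht.continuousAt

theorem eventuallyEq_zero_or_eventually_ne_zero (hH : IsHardyField H) (hf : f ∈ H) :
    (f =ᶠ[atTop] fun _ => 0) ∨ ∀ᶠ t in atTop, f t ≠ 0 := by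
  by_cases h0 : f =ᶠ[atTop] fun _ => 0
  · exact Or.inl h0
  -- `2 f f⁻¹ - 1` is `±1` everywhere and eventually continuous.
  have hc : ∀ᶠ t in atTop, ContinuousAt (fun t => 2 * (f t * (f t)⁻¹) - 1) t :=
    (hH.eventually_continuousAt (hH.mul_mem hf (hH.inv_mem hf h0))).mono fun _ ht =>
      (continuousAt_const.mul ht).sub continuousAt_const
  have hne : ∀ t, 2 * (f t * (f t)⁻¹) - 1 ≠ 0 := fun t => by
    by_cases hft : f t = 0 <;> norm_num [hft]
  rcases eventually_pos_or_neg_of_continuousAt hc (.of_forall hne) with h | h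
  · exact Or.inr (h.mono fun t ht hft => by norm_num [hft] at ht)
  · exact Or.inl (h.mono fun t ht => by_contra fun hft => by norm_num [hft] at ht)

theorem eventually_nonneg_or_nonpos (hH : IsHardyField H) (hf : f ∈ H) :
    (∀ᶠ t in atTop, 0 ≤ f t) ∨ ∀ᶠ t in atTop, f t ≤ 0 := by
  rcases hH.eventuallyEq_zero_or_eventually_ne_zero hf with h | h
  · exact Or.inl (h.mono fun _ ht => ht.ge)
  · exact (eventually_pos_or_neg_of_continuousAt (hH.eventually_continuousAt hf) h).imp
      (·.mono fun _ => le_of_lt) (·.mono fun _ => le_of_lt)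

theorem exists_monotoneOn_or_antitoneOn_Ici (hH : IsHardyField H) (hf : f ∈ H) :
    ∃ T, MonotoneOn f (Set.Ici T) ∨ AntitoneOn f (Set.Ici T) := by
  rcases hH.eventually_nonneg_or_nonpos (hH.deriv_mem hf) with h | h
  · exact (exists_monotoneOn_Ici_of_eventually_deriv_nonneg (hH.eventuallyDifferentiable hf)
      h).imp fun _ => Or.inl
  · exact (exists_antitoneOn_Ici_of_eventually_deriv_nonpos (hH.eventuallyDifferentiable hf)
      h).imp fun _ => Or.inr

theorem tendsto_atTop_or_atBot_or_nhds (hH : IsHardyField H) (hf : f ∈ H) :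
    Tendsto f atTop atTop ∨ Tendsto f atTop atBot ∨ ∃ l, Tendsto f atTop (𝓝 l) := by
  obtain ⟨T, hmono | hanti⟩ := hH.exists_monotoneOn_or_antitoneOn_Ici hf
  · exact hmono.tendsto_atTop_or_nhds_of_Ici.imp_right Or.inr
  · exact Or.inr hanti.tendsto_atBot_or_nhds_of_Ici

end IsHardyField

theorem exists_poly_add_stronglyNonPoly_of_prec_pow {H : Set (ℝ → ℝ)} (hH : IsHardyField H)
    (hLE : ContainsLE H) (k : ℕ) {f : ℝ → ℝ} (hf : f ∈ H) (hfk : Prec f fun t => t ^ k) :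
    ∃ (p : Polynomial ℝ) (x : ℝ → ℝ), x ∈ H ∧ StronglyNonPoly x ∧
      ∀ t, f t = p.eval t + x t := by
  induction k generalizing f with
  | zero => exact ⟨0, f, hf, Or.inr (by simpa [Prec] using hfk), by simp⟩
  | succ k ih =>
    rcases hH.tendsto_atTop_or_atBot_or_nhds (hH.div_pow_mem hLE hf k) with h | h | ⟨c, hc⟩
    · exact ⟨0, f, hf, Or.inl ⟨k, prec_of_tendsto_div_atTop h, hfk⟩, by simp⟩
    · exact ⟨0, f, hf, Or.inl ⟨k, prec_of_tendsto_div_atBot h, hfk⟩, by simp⟩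
    · have hmem : (fun t => f t - c * t ^ k) ∈ H :=
        hH.sub_mem hf (hLE _ ((IsLE.const c).mul (isLE_pow k)))
      obtain ⟨p, x, hx, hxs, hfpx⟩ := ih hmem (prec_pow_of_tendsto_div_pow hc)
      refine ⟨p + Polynomial.C c * Polynomial.X ^ k, x, hx, hxs, fun t => ?_⟩
      simp only [Polynomial.eval_add, Polynomial.eval_mul, Polynomial.eval_C,
        Polynomial.eval_pow, Polynomial.eval_X]
      linarith [hfpx t]

/-- Every `f` of polynomial growth in a Hardy field containing ℒℰ can be
written as `f = p + x` with `p` a real polynomial and `x ∈ H` strongly non-polynomial. -/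
theorem stmt_16 (H : Set (ℝ → ℝ)) (hH : IsHardyField H) (hLE : ContainsLE H)
    (f : ℝ → ℝ) (hf : f ∈ H) (hgr : PolyGrowth f) :
    ∃ (p : Polynomial ℝ) (x : ℝ → ℝ), x ∈ H ∧ StronglyNonPoly x ∧
      ∀ t, f t = p.eval t + x t := by
  obtain ⟨k, -, hk⟩ := hgr
  exact exists_poly_add_stronglyNonPoly_of_prec_pow hH hLE k hf hk

end
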